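/- arXiv:math/0312194 — 6 statements merged into one kernel-verified Lean document; each statement's English description precedes it below -/
import Mathlib

section
/- Let a, b, c, d be complex numbers and 1 ≤ p ≤ 2. Then the Schatten p-norm of the 2×2 matrix [[a,b],[c,d]] is at least the Schatten p-norm of the 2×2 matrix [[|a|,|b|],[|c|,|d|]]. For p ≥ 2 the inequality is reversed. -/
/-!
The eigenvalues of `Mᴴ * M` for a `2 × 2` matrix `M` have sum `∑ |Mᵢⱼ|²` and product
`|det M|²`. Replacing the entries by their moduli keeps the sum and, by the reverse triangle
inequality `|a||d| - |b||c| ≤ |ad - bc|`, can only lower `|det|`: the eigenvalue pair spreads apart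
with its sum fixed. Since `t ↦ t ^ (p / 2)` is concave for `p ≤ 2` and convex for `p ≥ 2`,
spreading decreases `Tr (Mᴴ M) ^ (p / 2)` in the first case and increases it in the second.
-/

open scoped Matrix

/-- The Schatten `p`-norm `(Tr (M* M)^{p/2})^{1/p}` of a complex matrix,
defined via the eigenvalues of the positive semidefinite matrix `Mᴴ * M`. -/
noncomputable def schattenNorm {n : Type*} [Fintype n] [DecidableEq n]
    (p : ℝ) (M : Matrix n n ℂ) : ℝ :=
  (∑ i, (Matrix.isHermitian_conjTranspose_mul_self M).eigenvalues i ^ (p / 2)) ^ (1 / p)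

local notation "eig[" A "]" =>
  Matrix.IsHermitian.eigenvalues (Matrix.isHermitian_conjTranspose_mul_self A)

theorem ConcaveOn.add_le_add_of_mem_Icc {s : Set ℝ} {f : ℝ → ℝ} (hf : ConcaveOn ℝ s f)
    {x y u v : ℝ} (hu : u ∈ s) (hv : v ∈ s) (hx : x ∈ Set.Icc u v)
    (hsum : x + y = u + v) : f u + f v ≤ f x + f y := by
  obtain ⟨hux, hxv⟩ := hx
  rcases hux.eq_or_lt with rfl | hlt
  · obtain rfl : y = v := by linarith
    rfl
  set t := (x - u) / (v - u)
  have huv : 0 < v - u := by linarith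
  have ht0 : 0 ≤ t := div_nonneg (by linarith) huv.le
  have ht1 : 0 ≤ 1 - t := by rw [sub_nonneg]; exact div_le_one_of_le₀ (by linarith) huv.le
  have hx : (1 - t) • u + t • v = x := by simp only [smul_eq_mul, t]; field_simp; ring
  have hy : t • u + (1 - t) • v = y := by simp only [smul_eq_mul] at hx ⊢; linarith
  have hfx := hf.2 hu hv ht1 ht0 (by ring)
  have hfy := hf.2 hu hv ht0 ht1 (by ring)
  rw [hx] at hfx
  rw [hy] at hfy
  simp only [smul_eq_mul] at hfx hfy
  linarith

theorem ConcaveOn.add_le_add_of_add_eq_of_mul_le {s : Set ℝ} {f : ℝ → ℝ}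
    (hf : ConcaveOn ℝ s f) {x y u v : ℝ} (hu : u ∈ s) (hv : v ∈ s)
    (hsum : x + y = u + v) (hprod : u * v ≤ x * y) : f u + f v ≤ f x + f y := by
  wlog huv : u ≤ v generalizing u v
  · rw [add_comm (f u)]
    exact this hv hu (by linarith) (by linarith) (by linarith)
  -- with the sum fixed, `(x - u) * (v - x) = x * y - u * v`, so `x` lies between `u` and `v`
  have hxuv : 0 ≤ (x - u) * (v - x) := by
    rw [show (x - u) * (v - x) = x * y - u * v by rw [show y = u + v - x by linarith]; ring]
    linarith
  exact hf.add_le_add_of_mem_Icc hu hv ⟨by nlinarith, by nlinarith⟩ hsum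

namespace Matrix

variable (M : Matrix (Fin 2) (Fin 2) ℂ)

theorem eigenvalues_conjTranspose_mul_self_add_fin_two :
    eig[M] 0 + eig[M] 1 = ∑ i, ∑ j, ‖M i j‖ ^ 2 := by
  have h := (isHermitian_conjTranspose_mul_self M).trace_eq_sum_eigenvalues
  have htr : (Mᴴ * M).trace = ((∑ i, ∑ j, ‖M i j‖ ^ 2 : ℝ) : ℂ) := by
    simp [trace_fin_two, mul_apply, Fin.sum_univ_two, Complex.conj_mul']
    ring
  rw [Fin.sum_univ_two, htr] at h
  simpa [← Complex.ofReal_pow] using congrArg Complex.re h.symm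

theorem eigenvalues_conjTranspose_mul_self_mul_fin_two :
    eig[M] 0 * eig[M] 1 = ‖M.det‖ ^ 2 := by
  have h := (isHermitian_conjTranspose_mul_self M).det_eq_prod_eigenvalues
  rw [Fin.prod_univ_two, det_mul, det_conjTranspose, Complex.star_def, Complex.conj_mul'] at h
  simpa [← Complex.ofReal_pow] using congrArg Complex.re h.symm

theorem norm_det_map_norm_fin_two_le :
    ‖(M.map fun z => (‖z‖ : ℂ)).det‖ ≤ ‖M.det‖ := by
  rw [det_fin_two, det_fin_two]
  simp only [map_apply]
  norm_cast
  rw [Real.norm_eq_abs, ← norm_mul, ← norm_mul]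
  exact abs_norm_sub_norm_le _ _

end Matrix

theorem schattenNorm_fin_two (p : ℝ) (M : Matrix (Fin 2) (Fin 2) ℂ) :
    schattenNorm p M = (eig[M] 0 ^ (p / 2) + eig[M] 1 ^ (p / 2)) ^ (1 / p) := by
  rw [schattenNorm, Fin.sum_univ_two]

section SpreadEigenvalues

variable {M N : Matrix (Fin 2) (Fin 2) ℂ}
  (hsum : ∑ i, ∑ j, ‖M i j‖ ^ 2 = ∑ i, ∑ j, ‖N i j‖ ^ 2) (hdet : ‖N.det‖ ≤ ‖M.det‖)
include hsum hdet

theorem ConcaveOn.add_eigenvalues_conjTranspose_mul_self_le {f : ℝ → ℝ}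
    (hf : ConcaveOn ℝ (Set.Ici 0) f) :
    f (eig[N] 0) + f (eig[N] 1) ≤ f (eig[M] 0) + f (eig[M] 1) := by
  rw [← M.eigenvalues_conjTranspose_mul_self_add_fin_two,
    ← N.eigenvalues_conjTranspose_mul_self_add_fin_two] at hsum
  have hprod := pow_le_pow_left₀ (norm_nonneg _) hdet 2
  rw [← M.eigenvalues_conjTranspose_mul_self_mul_fin_two,
    ← N.eigenvalues_conjTranspose_mul_self_mul_fin_two] at hprod
  have hN := N.eigenvalues_conjTranspose_mul_self_nonneg
  exact hf.add_le_add_of_add_eq_of_mul_le (hN 0) (hN 1) hsum hprod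

theorem ConvexOn.add_eigenvalues_conjTranspose_mul_self_le {f : ℝ → ℝ}
    (hf : ConvexOn ℝ (Set.Ici 0) f) :
    f (eig[M] 0) + f (eig[M] 1) ≤ f (eig[N] 0) + f (eig[N] 1) := by
  have := hf.neg.add_eigenvalues_conjTranspose_mul_self_le hsum hdet
  simp only [Pi.neg_apply] at this
  linarith

theorem schattenNorm_le_of_norm_det_le_of_le_two {p : ℝ} (hp1 : 1 ≤ p) (hp2 : p ≤ 2) :
    schattenNorm p N ≤ schattenNorm p M := by
  have hN := N.eigenvalues_conjTranspose_mul_self_nonneg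
  rw [schattenNorm_fin_two, schattenNorm_fin_two]
  exact Real.rpow_le_rpow (add_nonneg (Real.rpow_nonneg (hN 0) _) (Real.rpow_nonneg (hN 1) _))
    ((Real.concaveOn_rpow (by linarith) (by linarith)).add_eigenvalues_conjTranspose_mul_self_le
      hsum hdet) (by positivity)

theorem schattenNorm_le_of_norm_det_le_of_two_le {p : ℝ} (hp : 2 ≤ p) :
    schattenNorm p M ≤ schattenNorm p N := by
  have hM := M.eigenvalues_conjTranspose_mul_self_nonneg
  rw [schattenNorm_fin_two, schattenNorm_fin_two]
  exact Real.rpow_le_rpow (add_nonneg (Real.rpow_nonneg (hM 0) _) (Real.rpow_nonneg (hM 1) _))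
    ((convexOn_rpow (by linarith)).add_eigenvalues_conjTranspose_mul_self_le hsum hdet)
    (by positivity)

end SpreadEigenvalues

theorem schatten_abs_entries (a b c d : ℂ) (p : ℝ) :
    (1 ≤ p → p ≤ 2 →
      schattenNorm p !![(‖a‖ : ℂ), (‖b‖ : ℂ);
                        (‖c‖ : ℂ), (‖d‖ : ℂ)] ≤
        schattenNorm p !![a, b; c, d]) ∧
    (2 ≤ p →
      schattenNorm p !![a, b; c, d] ≤
        schattenNorm p !![(‖a‖ : ℂ), (‖b‖ : ℂ);
                          (‖c‖ : ℂ), (‖d‖ : ℂ)]) := by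
  set M : Matrix (Fin 2) (Fin 2) ℂ := !![a, b; c, d]
  have hmap : !![(‖a‖ : ℂ), (‖b‖ : ℂ); (‖c‖ : ℂ), (‖d‖ : ℂ)] = M.map fun z => (‖z‖ : ℂ) := by
    ext i j; fin_cases i <;> fin_cases j <;> rfl
  have hsum : ∑ i, ∑ j, ‖M i j‖ ^ 2 = ∑ i, ∑ j, ‖(M.map fun z => (‖z‖ : ℂ)) i j‖ ^ 2 := by
    simp
  rw [hmap]
  exact ⟨schattenNorm_le_of_norm_det_le_of_le_two hsum M.norm_det_map_norm_fin_two_le,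
    schattenNorm_le_of_norm_det_le_of_two_le hsum M.norm_det_map_norm_fin_two_le⟩
end

section
/- Let 1 ≤ p ≤ 2 and let T, D, D' be real numbers with T² ≥ 4D ≥ 0, T² ≥ 4D' ≥ 0, T ≥ 0 and D ≥ D'. Then (T + √(T²-4D))^{p/2} + (T - √(T²-4D))^{p/2} ≥ (T + √(T²-4D'))^{p/2} + (T - √(T²-4D'))^{p/2}. For p ≥ 2 the inequality is reversed. -/
/-- Four point inequality for convex functions on `Ici 0`:
if `x ≤ y ≤ z ≤ w` and `x + w = y + z`, then `f y + f z ≤ f x + f w`. -/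
lemma four_point_convex {f : ℝ → ℝ} (hf : ConvexOn ℝ (Set.Ici 0) f)
    {x y z w : ℝ} (hx : 0 ≤ x) (h1 : x ≤ y) (h2 : y ≤ z) (h3 : z ≤ w)
    (hsum : x + w = y + z) : f y + f z ≤ f x + f w := by
  rcases eq_or_lt_of_le h1 with rfl | hxy
  · have : w = z := by linarith
    subst this; linarith
  have hxz : x < z := lt_of_lt_of_le hxy h2
  have hzw : z < w := by linarith
  have hy : y ∈ Set.Ici (0:ℝ) := le_of_lt (lt_of_le_of_lt hx hxy)
  have hz : z ∈ Set.Ici (0:ℝ) := le_trans hy h2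
  have hw : w ∈ Set.Ici (0:ℝ) := le_trans hz (le_of_lt hzw)
  have hs1 : (f y - f x) / (y - x) ≤ (f w - f x) / (w - x) :=
    hf.secant_mono_aux2 hx hw hxy (lt_of_le_of_lt h2 hzw)
  have hs2 : (f w - f x) / (w - x) ≤ (f w - f z) / (w - z) :=
    hf.secant_mono_aux3 hx hw hxz hzw
  have hden : y - x = w - z := by linarith
  have hpos : 0 < y - x := by linarith
  have := le_trans hs1 hs2
  rw [← hden] at this
  have := (div_le_div_iff_of_pos_right hpos).mp this
  linarith

lemma four_point_concave {f : ℝ → ℝ} (hf : ConcaveOn ℝ (Set.Ici 0) f)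
    {x y z w : ℝ} (hx : 0 ≤ x) (h1 : x ≤ y) (h2 : y ≤ z) (h3 : z ≤ w)
    (hsum : x + w = y + z) : f x + f w ≤ f y + f z := by
  have := four_point_convex hf.neg hx h1 h2 h3 hsum
  simp only [Pi.neg_apply] at this
  linarith

theorem scalar_concavity_ineq (p T D D' : ℝ)
    (hD : 0 ≤ D) (hD' : 0 ≤ D') (hTD : 4 * D ≤ T ^ 2) (hTD' : 4 * D' ≤ T ^ 2)
    (hT : 0 ≤ T) (hDD' : D' ≤ D) :
    (1 ≤ p → p ≤ 2 →
      (T + Real.sqrt (T ^ 2 - 4 * D')) ^ (p / 2) +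
          (T - Real.sqrt (T ^ 2 - 4 * D')) ^ (p / 2) ≤
        (T + Real.sqrt (T ^ 2 - 4 * D)) ^ (p / 2) +
          (T - Real.sqrt (T ^ 2 - 4 * D)) ^ (p / 2)) ∧
    (2 ≤ p →
      (T + Real.sqrt (T ^ 2 - 4 * D)) ^ (p / 2) +
          (T - Real.sqrt (T ^ 2 - 4 * D)) ^ (p / 2) ≤
        (T + Real.sqrt (T ^ 2 - 4 * D')) ^ (p / 2) +
          (T - Real.sqrt (T ^ 2 - 4 * D')) ^ (p / 2)) := by
  set a := Real.sqrt (T ^ 2 - 4 * D) with ha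
  set b := Real.sqrt (T ^ 2 - 4 * D') with hb
  have ha0 : 0 ≤ a := Real.sqrt_nonneg _
  have hab : a ≤ b := Real.sqrt_le_sqrt (by linarith)
  have hbT : b ≤ T := by
    have : b ≤ Real.sqrt (T ^ 2) := Real.sqrt_le_sqrt (by linarith)
    rwa [Real.sqrt_sq hT] at this
  have hx : (0:ℝ) ≤ T - b := by linarith
  have h1 : T - b ≤ T - a := by linarith
  have h2 : T - a ≤ T + a := by linarith
  have h3 : T + a ≤ T + b := by linarith
  have hsum : (T - b) + (T + b) = (T - a) + (T + a) := by ring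
  constructor
  · intro hp1 hp2
    have := four_point_concave (Real.concaveOn_rpow (by linarith : (0:ℝ) ≤ p / 2)
      (by linarith : p / 2 ≤ 1)) hx h1 h2 h3 hsum
    linarith
  · intro hp2
    have := four_point_convex (convexOn_rpow (by linarith : (1:ℝ) ≤ p / 2))
      hx h1 h2 h3 hsum
    linarith
end

section
/- Let A, B, C, D be diagonal complex n×n matrices and 1 ≤ p ≤ 2. Then the Schatten p-norm of the 2n×2n block matrix [[A,B],[C,D]] is at least the Schatten p-norm of [[|A|,|B|],[|C|,|D|]], where |X| = (X*X)^{1/2}. For p ≥ 2 the inequality is reversed. -/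
open scoped Matrix

/-!
Pairing the `i`-th coordinates of the two blocks, `Mᴴ M` splits into the `2 × 2` Hermitian
matrices `[[e, f], [f̄, g]]` with `e = |aᵢ|² + |cᵢ|²`, `g = |bᵢ|² + |dᵢ|²`, `f = āᵢ bᵢ + c̄ᵢ dᵢ`,
whose eigenvalues are `t ± r` with `t = (e + g) / 2` and `r = √(((e - g) / 2)² + |f|²)`.
Replacing the entries by their moduli keeps `e`, `g`, hence `t`, and raises `|f|` to
`|aᵢ| |bᵢ| + |cᵢ| |dᵢ|`, which is still at most `√(e g)` by Cauchy–Schwarz; so `r` grows inside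
`[0, t]`. Pushing a symmetric pair `t ± r` apart lowers `φ (t - r) + φ (t + r)` when `φ` is
concave, as `x ↦ x ^ (p / 2)` is for `p ≤ 2`, and raises it when `φ` is convex (`p ≥ 2`).
-/

open Polynomial Matrix Finset Set

theorem ConcaveOn.map_add_add_map_sub_le_of_abs_le {s : Set ℝ} {φ : ℝ → ℝ}
    (hφ : ConcaveOn ℝ s φ) {t r₁ r₂ : ℝ} (hr : |r₁| ≤ r₂) (hl : t - r₂ ∈ s) (hu : t + r₂ ∈ s) :
    φ (t + r₂) + φ (t - r₂) ≤ φ (t + r₁) + φ (t - r₁) := by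
  obtain ⟨hlo, hhi⟩ := abs_le.mp hr
  rcases (abs_nonneg r₁).trans hr |>.eq_or_lt with hr₂ | hr₂
  · obtain rfl : r₁ = 0 := by linarith
    rw [← hr₂]
  -- `t ± r₁` are the convex combinations of `t ± r₂` and `t ∓ r₂` with weights `μ`, `1 - μ`.
  set μ := (r₂ + r₁) / (2 * r₂) with hμ
  have hμ₀ : 0 ≤ μ := div_nonneg (by linarith) (by linarith)
  have hμ₁ : 0 ≤ 1 - μ := by rw [sub_nonneg, div_le_one (by linarith)]; linarith
  have hadd := hφ.2 hu hl hμ₀ hμ₁ (by ring)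
  have hsub := hφ.2 hl hu hμ₀ hμ₁ (by ring)
  have eadd : μ • (t + r₂) + (1 - μ) • (t - r₂) = t + r₁ := by
    simp only [smul_eq_mul, hμ]; field_simp; ring
  have esub : μ • (t - r₂) + (1 - μ) • (t + r₂) = t - r₁ := by
    simp only [smul_eq_mul, hμ]; field_simp; ring
  rw [eadd, smul_eq_mul, smul_eq_mul] at hadd
  rw [esub, smul_eq_mul, smul_eq_mul] at hsub
  linarith

theorem Polynomial.X_sub_C_mul_X_sub_C_sub_C_eq {R : Type*} [CommRing R] {e g k u v : R}
    (hsum : u + v = e + g) (hprod : u * v = e * g - k) :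
    (X - C e) * (X - C g) - C k = (X - C u) * (X - C v) := by
  have hsum' := congrArg C hsum
  have hprod' := congrArg C hprod
  simp only [map_add, map_mul, map_sub] at hsum' hprod'
  linear_combination X * hsum' - hprod'

namespace Matrix

theorem det_fromBlocks_diagonal {R m : Type*} [CommRing R] [Fintype m] [DecidableEq m]
    (a b c d : m → R) :
    (fromBlocks (diagonal a) (diagonal b) (diagonal c) (diagonal d)).det =
      ∏ i, (a i * d i - b i * c i) := by
  let e : Fin 2 × m ≃ m ⊕ m :=
    (finTwoEquiv.prodCongr (Equiv.refl m)).trans (Equiv.boolProdEquivSum m)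
  have : (fromBlocks (diagonal a) (diagonal b) (diagonal c) (diagonal d)).submatrix e e =
      blockDiagonal fun i => !![a i, b i; c i, d i] := by
    ext ⟨k, i⟩ ⟨l, j⟩
    fin_cases k <;> fin_cases l <;> by_cases h : i = j <;>
      simp [e, finTwoEquiv, Equiv.boolProdEquivSum, blockDiagonal_apply, h]
  rw [← det_submatrix_equiv_self e, this, det_blockDiagonal]
  simp [det_fin_two_of]

theorem charpoly_fromBlocks_diagonal {R m : Type*} [CommRing R] [Fintype m] [DecidableEq m]
    (a b c d : m → R) :
    (fromBlocks (diagonal a) (diagonal b) (diagonal c) (diagonal d)).charpoly =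
      ∏ i, ((X - C (a i)) * (X - C (d i)) - C (b i * c i)) := by
  simp [charpoly, charmatrix_fromBlocks, diagonal_map, det_fromBlocks_diagonal]

theorem conjTranspose_mul_self_fromBlocks_diagonal {𝕜 m : Type*} [RCLike 𝕜] [Fintype m]
    [DecidableEq m] (a b c d : m → 𝕜) :
    (fromBlocks (diagonal a) (diagonal b) (diagonal c) (diagonal d))ᴴ *
        fromBlocks (diagonal a) (diagonal b) (diagonal c) (diagonal d) =
      fromBlocks (diagonal fun i => ((‖a i‖ ^ 2 + ‖c i‖ ^ 2 : ℝ) : 𝕜))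
        (diagonal fun i => star (a i) * b i + star (c i) * d i)
        (diagonal (star fun i => star (a i) * b i + star (c i) * d i))
        (diagonal fun i => ((‖b i‖ ^ 2 + ‖d i‖ ^ 2 : ℝ) : 𝕜)) := by
  simp [fromBlocks_conjTranspose, fromBlocks_multiply, diagonal_conjTranspose, RCLike.mul_conj,
    mul_comm]

end Matrix

/-- The eigenvalues of the Hermitian matrix `[[e, f], [f̄, g]]` with `‖f‖ = s` are
`(e + g) / 2 ± halfGap e g s`. -/
noncomputable def halfGap (e g s : ℝ) : ℝ := √(((e - g) / 2) ^ 2 + s ^ 2)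

theorem halfGap_nonneg (e g s : ℝ) : 0 ≤ halfGap e g s := Real.sqrt_nonneg _

theorem halfGap_sq (e g s : ℝ) : halfGap e g s ^ 2 = ((e - g) / 2) ^ 2 + s ^ 2 :=
  Real.sq_sqrt (by positivity)

theorem halfGap_le_halfGap {e g s s' : ℝ} (h : s ^ 2 ≤ s' ^ 2) :
    halfGap e g s ≤ halfGap e g s' :=
  Real.sqrt_le_sqrt (by linarith)

theorem halfGap_le {e g s : ℝ} (hs : s ^ 2 ≤ e * g) (heg : 0 ≤ e + g) :
    halfGap e g s ≤ (e + g) / 2 :=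
  Real.sqrt_le_iff.mpr ⟨by linarith, by linarith⟩

theorem X_sub_C_mul_X_sub_C_sub_C_mul_star_eq {𝕜 : Type*} [RCLike 𝕜] (e g : ℝ) (f : 𝕜) :
    (X - C (e : 𝕜)) * (X - C (g : 𝕜)) - C (f * star f) =
      (X - C (((e + g) / 2 + halfGap e g ‖f‖ : ℝ) : 𝕜)) *
        (X - C (((e + g) / 2 - halfGap e g ‖f‖ : ℝ) : 𝕜)) := by
  refine X_sub_C_mul_X_sub_C_sub_C_eq (by push_cast; ring) ?_
  have hprod : ((e + g) / 2 + halfGap e g ‖f‖) * ((e + g) / 2 - halfGap e g ‖f‖) =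
      e * g - ‖f‖ ^ 2 := by
    linear_combination -(halfGap_sq e g ‖f‖)
  rw [RCLike.star_def, RCLike.mul_conj]
  exact_mod_cast hprod

namespace Matrix.IsHermitian

variable {𝕜 m : Type*} [RCLike 𝕜] [Fintype m] [DecidableEq m]

theorem sum_eigenvalues_of_charpoly_eq_prod {ι : Type*} [Fintype ι] {A : Matrix m m 𝕜}
    (hA : A.IsHermitian) {u v : ι → ℝ}
    (h : A.charpoly = ∏ i, (X - C (u i : 𝕜)) * (X - C (v i : 𝕜))) (φ : ℝ → ℝ) :
    ∑ j, φ (hA.eigenvalues j) = ∑ i, (φ (u i) + φ (v i)) := by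
  have hroots := hA.roots_charpoly_eq_eigenvalues
  rw [h, roots_prod _ _ (by simp [prod_ne_zero_iff, X_sub_C_ne_zero])] at hroots
  have : univ.val.map hA.eigenvalues = univ.val.bind fun i => {u i, v i} := by
    apply Multiset.map_injective (RCLike.ofReal_injective (K := 𝕜))
    rw [Multiset.map_map, ← hroots]
    simp [roots_mul, X_sub_C_ne_zero]
  have hsum := congrArg (fun s => (s.map φ).sum) this
  simpa [Multiset.map_bind, Multiset.sum_bind, Multiset.map_map, ← sum_eq_multiset_sum,
    sum_add_distrib] using hsum

theorem sum_eigenvalues_fromBlocks_diagonal {A : Matrix (m ⊕ m) (m ⊕ m) 𝕜}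
    (hA : A.IsHermitian) {e g : m → ℝ} {f : m → 𝕜}
    (h : A = Matrix.fromBlocks (diagonal fun i => (e i : 𝕜)) (diagonal f) (diagonal (star f))
      (diagonal fun i => (g i : 𝕜))) (φ : ℝ → ℝ) :
    ∑ j, φ (hA.eigenvalues j) = ∑ i, (φ ((e i + g i) / 2 + halfGap (e i) (g i) ‖f i‖) +
      φ ((e i + g i) / 2 - halfGap (e i) (g i) ‖f i‖)) :=
  hA.sum_eigenvalues_of_charpoly_eq_prod (by
    simp_rw [h, charpoly_fromBlocks_diagonal, Pi.star_apply,
      X_sub_C_mul_X_sub_C_sub_C_mul_star_eq]) φ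

end Matrix.IsHermitian

section BlockDiagonal

variable {m : Type*} [Fintype m] [DecidableEq m] {φ : ℝ → ℝ}

theorem sum_eigenvalues_conjTranspose_mul_self_fromBlocks_diagonal_norm_le
    (hφ : ConcaveOn ℝ (Ici 0) φ) (a b c d : m → ℂ) :
    ∑ j, φ ((isHermitian_conjTranspose_mul_self (fromBlocks
      (diagonal fun i => ((‖a i‖ : ℝ) : ℂ)) (diagonal fun i => ((‖b i‖ : ℝ) : ℂ))
      (diagonal fun i => ((‖c i‖ : ℝ) : ℂ))
      (diagonal fun i => ((‖d i‖ : ℝ) : ℂ)))).eigenvalues j) ≤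
    ∑ j, φ ((isHermitian_conjTranspose_mul_self (fromBlocks (diagonal a) (diagonal b)
      (diagonal c) (diagonal d))).eigenvalues j) := by
  rw [IsHermitian.sum_eigenvalues_fromBlocks_diagonal _
      (conjTranspose_mul_self_fromBlocks_diagonal ..),
    IsHermitian.sum_eigenvalues_fromBlocks_diagonal _
      (conjTranspose_mul_self_fromBlocks_diagonal ..)]
  refine sum_le_sum fun i _ => ?_
  have hnorm : ‖star ((‖a i‖ : ℝ) : ℂ) * ((‖b i‖ : ℝ) : ℂ) +
      star ((‖c i‖ : ℝ) : ℂ) * ((‖d i‖ : ℝ) : ℂ)‖ = ‖a i‖ * ‖b i‖ + ‖c i‖ * ‖d i‖ := by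
    simp only [Complex.star_def, Complex.conj_ofReal]
    norm_cast
    exact Real.norm_of_nonneg (by positivity)
  have hs : ‖star (a i) * b i + star (c i) * d i‖ ≤ ‖a i‖ * ‖b i‖ + ‖c i‖ * ‖d i‖ :=
    (norm_add_le _ _).trans (by simp only [norm_mul, norm_star, le_refl])
  have hcs : (‖a i‖ * ‖b i‖ + ‖c i‖ * ‖d i‖) ^ 2 ≤
      (‖a i‖ ^ 2 + ‖c i‖ ^ 2) * (‖b i‖ ^ 2 + ‖d i‖ ^ 2) := by
    nlinarith [sq_nonneg (‖a i‖ * ‖d i‖ - ‖b i‖ * ‖c i‖)]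
  have hmid := halfGap_le hcs (by positivity)
  simp only [Complex.norm_real, norm_norm, hnorm]
  refine hφ.map_add_add_map_sub_le_of_abs_le ?_ ?_ ?_
  · rw [abs_of_nonneg (halfGap_nonneg ..)]
    exact halfGap_le_halfGap (pow_le_pow_left₀ (norm_nonneg _) hs 2)
  · exact mem_Ici.mpr (by linarith)
  · exact mem_Ici.mpr (add_nonneg (by positivity) (halfGap_nonneg ..))

theorem sum_eigenvalues_conjTranspose_mul_self_fromBlocks_diagonal_le_norm
    (hφ : ConvexOn ℝ (Ici 0) φ) (a b c d : m → ℂ) :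
    ∑ j, φ ((isHermitian_conjTranspose_mul_self (fromBlocks (diagonal a) (diagonal b)
      (diagonal c) (diagonal d))).eigenvalues j) ≤
    ∑ j, φ ((isHermitian_conjTranspose_mul_self (fromBlocks
      (diagonal fun i => ((‖a i‖ : ℝ) : ℂ)) (diagonal fun i => ((‖b i‖ : ℝ) : ℂ))
      (diagonal fun i => ((‖c i‖ : ℝ) : ℂ))
      (diagonal fun i => ((‖d i‖ : ℝ) : ℂ)))).eigenvalues j) := by
  simpa only [Pi.neg_apply, sum_neg_distrib, neg_le_neg_iff] using
    sum_eigenvalues_conjTranspose_mul_self_fromBlocks_diagonal_norm_le hφ.neg a b c d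

end BlockDiagonal

theorem schattenNorm_le_schattenNorm_of_sum_le {m : Type*} [Fintype m] [DecidableEq m] {p : ℝ}
    (hp : 0 ≤ p) {M N : Matrix m m ℂ}
    (h : ∑ i, (isHermitian_conjTranspose_mul_self M).eigenvalues i ^ (p / 2) ≤
      ∑ i, (isHermitian_conjTranspose_mul_self N).eigenvalues i ^ (p / 2)) :
    schattenNorm p M ≤ schattenNorm p N :=
  Real.rpow_le_rpow (sum_nonneg fun i _ =>
    Real.rpow_nonneg (eigenvalues_conjTranspose_mul_self_nonneg M i) _) h (by positivity)

theorem block_diagonal_abs_ineq {n : ℕ} (p : ℝ) (a b c d : Fin n → ℂ) :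
    (1 ≤ p → p ≤ 2 →
      schattenNorm p
          (Matrix.fromBlocks
            (Matrix.diagonal fun i => ((‖a i‖ : ℝ) : ℂ))
            (Matrix.diagonal fun i => ((‖b i‖ : ℝ) : ℂ))
            (Matrix.diagonal fun i => ((‖c i‖ : ℝ) : ℂ))
            (Matrix.diagonal fun i => ((‖d i‖ : ℝ) : ℂ))) ≤
        schattenNorm p
          (Matrix.fromBlocks (Matrix.diagonal a) (Matrix.diagonal b)
            (Matrix.diagonal c) (Matrix.diagonal d))) ∧
    (2 ≤ p →
      schattenNorm p
          (Matrix.fromBlocks (Matrix.diagonal a) (Matrix.diagonal b)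
            (Matrix.diagonal c) (Matrix.diagonal d)) ≤
        schattenNorm p
          (Matrix.fromBlocks
            (Matrix.diagonal fun i => ((‖a i‖ : ℝ) : ℂ))
            (Matrix.diagonal fun i => ((‖b i‖ : ℝ) : ℂ))
            (Matrix.diagonal fun i => ((‖c i‖ : ℝ) : ℂ))
            (Matrix.diagonal fun i => ((‖d i‖ : ℝ) : ℂ)))) := by
  refine ⟨fun hp₁ hp₂ => ?_, fun hp₂ => ?_⟩
  · exact schattenNorm_le_schattenNorm_of_sum_le (by linarith)
      (sum_eigenvalues_conjTranspose_mul_self_fromBlocks_diagonal_norm_le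
        (Real.concaveOn_rpow (by linarith) (by linarith)) a b c d)
  · exact schattenNorm_le_schattenNorm_of_sum_le (by linarith)
      (sum_eigenvalues_conjTranspose_mul_self_fromBlocks_diagonal_le_norm
        (convexOn_rpow (by linarith)) a b c d)
end

section
/- Let 1 < p < 2, and let A = [[a1, s],[s, b1]] and B = [[a2, s],[s, b2]] be 2×2 positive definite real symmetric matrices with a1 ≥ a2 > 0, b1 ≥ b2 > 0, and s ≥ 0. Then (A^{p-1})_{12} ≤ (B^{p-1})_{12}. -/
open scoped Matrix

/-- The real power `K^r` of a symmetric real matrix, via the spectral functional calculus. -/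
noncomputable def matPow {n : Type*} [Fintype n] [DecidableEq n] {K : Matrix n n ℝ}
    (hK : K.IsHermitian) (r : ℝ) : Matrix n n ℝ :=
  (hK.eigenvectorUnitary : Matrix n n ℝ) *
    Matrix.diagonal (fun i => hK.eigenvalues i ^ r) *
    star (hK.eigenvectorUnitary : Matrix n n ℝ)

/-!
Let `r = p - 1 ∈ (0, 1)`. On the spectrum `{λ₀, λ₁}` of a symmetric `2 × 2` matrix `K`, the
function `x ↦ x ^ r` agrees with its affine interpolant `α + β x`, where `β` is the divided
difference `(λ₁ ^ r - λ₀ ^ r) / (λ₁ - λ₀)`; hence `(K ^ r)₀₁ = β K₀₁`. The integral representation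
`c x ^ r = ∫₀^∞ t ^ r (t⁻¹ - (t + x)⁻¹) dt` (with `c > 0`) turns the divided difference into
`c β = ∫₀^∞ t ^ r / ((t + λ₀) (t + λ₁)) dt`, and `(t + λ₀) (t + λ₁) = det (t + K)`.
Since `det (t + A) ≥ det (t + B)` for `t ≥ 0`, the integral for `A` is the smaller one.
-/

open MeasureTheory Set Real

section RpowIntegral

variable {r t x y : ℝ}

lemma rpowIntegrand₀₁_sub_rpowIntegrand₀₁ (ht : 0 < t) (hx : 0 ≤ x) (hy : 0 ≤ y) :
    rpowIntegrand₀₁ r t y - rpowIntegrand₀₁ r t x = (y - x) * (t ^ r / ((t + x) * (t + y))) := by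
  unfold rpowIntegrand₀₁
  have : t + x ≠ 0 := by positivity
  have : t + y ≠ 0 := by positivity
  field_simp
  ring

lemma rpow_div_mul_add_le_rpowIntegrand₀₁_div (ht : 0 < t) (hx : 0 < x) (hy : 0 ≤ y) :
    t ^ r / ((t + x) * (t + y)) ≤ rpowIntegrand₀₁ r t x / x := by
  have hdiv : rpowIntegrand₀₁ r t x / x = t ^ r / ((t + x) * t) := by
    unfold rpowIntegrand₀₁
    field_simp
    ring
  rw [hdiv]
  gcongr
  linarith

lemma integrableOn_rpow_div_mul_add (hr : r ∈ Ioo 0 1) (hx : 0 < x) (hy : 0 ≤ y) :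
    IntegrableOn (fun t ↦ t ^ r / ((t + x) * (t + y))) (Ioi 0) := by
  refine ((integrableOn_rpowIntegrand₀₁_Ioi hr hx.le).div_const x).mono' ?_ ?_
  · exact (by fun_prop : Measurable fun t : ℝ ↦ t ^ r / ((t + x) * (t + y))).aestronglyMeasurable
  · refine ae_restrict_of_forall_mem measurableSet_Ioi fun t ht ↦ ?_
    have ht : 0 < t := ht
    rw [Real.norm_of_nonneg (by positivity)]
    exact rpow_div_mul_add_le_rpowIntegrand₀₁_div ht hx hy

lemma slope_rpow_mul_integral_rpowIntegrand₀₁_one (hr : r ∈ Ioo 0 1) (hx : 0 ≤ x) (hy : 0 ≤ y)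
    (hxy : x ≠ y) :
    slope (· ^ r) x y * ∫ t in Ioi 0, rpowIntegrand₀₁ r t 1 =
      ∫ t in Ioi 0, t ^ r / ((t + x) * (t + y)) := by
  rw [slope_def_field, div_mul_eq_mul_div, sub_mul,
    ← integral_rpowIntegrand₀₁_eq_rpow_mul_const hr hy,
    ← integral_rpowIntegrand₀₁_eq_rpow_mul_const hr hx,
    ← integral_sub (integrableOn_rpowIntegrand₀₁_Ioi hr hy)
      (integrableOn_rpowIntegrand₀₁_Ioi hr hx),
    div_eq_iff (sub_ne_zero.mpr hxy.symm), mul_comm, ← integral_const_mul]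
  exact setIntegral_congr_fun measurableSet_Ioi fun t ht ↦
    rpowIntegrand₀₁_sub_rpowIntegrand₀₁ ht hx hy

lemma setIntegral_rpow_div_mul_add_le_of_mul_le {x' y' : ℝ} (hr : r ∈ Ioo 0 1) (hx : 0 < x)
    (hy : 0 ≤ y) (hx' : 0 < x') (hy' : 0 ≤ y')
    (h : ∀ t > 0, (t + x') * (t + y') ≤ (t + x) * (t + y)) :
    ∫ t in Ioi 0, t ^ r / ((t + x) * (t + y)) ≤ ∫ t in Ioi 0, t ^ r / ((t + x') * (t + y')) := by
  refine setIntegral_mono_on (integrableOn_rpow_div_mul_add hr hx hy)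
    (integrableOn_rpow_div_mul_add hr hx' hy') measurableSet_Ioi fun t ht ↦ ?_
  have ht : 0 < t := ht
  exact div_le_div_of_nonneg_left (by positivity) (by positivity) (h t ht)

end RpowIntegral

namespace Matrix.IsHermitian

section

variable {n : Type*} [Fintype n] [DecidableEq n] {K : Matrix n n ℝ}

lemma matPow_eq_cfc (hK : K.IsHermitian) (r : ℝ) : matPow hK r = cfc (fun x : ℝ ↦ x ^ r) K := by
  rw [hK.cfc_eq, IsHermitian.cfc, Unitary.conjStarAlgAut_apply, matPow]
  rfl

lemma matPow_eq_smul_one_add_smul (hK : K.IsHermitian) {r α β : ℝ}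
    (h : ∀ i, hK.eigenvalues i ^ r = α + β * hK.eigenvalues i) :
    matPow hK r = α • (1 : Matrix n n ℝ) + β • K := by
  have hspec : (spectrum ℝ K).EqOn (fun x : ℝ ↦ x ^ r) (fun x ↦ α + β * x) := by
    rw [hK.spectrum_real_eq_range_eigenvalues]
    rintro _ ⟨i, rfl⟩
    exact h i
  rw [matPow_eq_cfc, cfc_congr hspec, cfc_const_add α _ K, cfc_const_mul_id β K,
    Algebra.algebraMap_eq_smul_one]

end

variable {K : Matrix (Fin 2) (Fin 2) ℝ}

lemma matPow_apply_zero_one_fin_two (hK : K.IsHermitian) (r : ℝ) :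
    matPow hK r 0 1 = slope (· ^ r) (hK.eigenvalues 0) (hK.eigenvalues 1) * K 0 1 := by
  set β := slope (· ^ r) (hK.eigenvalues 0) (hK.eigenvalues 1)
  have hinterp : ∀ i, hK.eigenvalues i ^ r =
      (hK.eigenvalues 0 ^ r - β * hK.eigenvalues 0) + β * hK.eigenvalues i := by
    refine Fin.forall_fin_two.mpr ⟨by ring, ?_⟩
    have := sub_smul_slope (· ^ r) (hK.eigenvalues 0) (hK.eigenvalues 1)
    rw [smul_eq_mul, vsub_eq_sub] at this
    linear_combination -this
  rw [matPow_eq_smul_one_add_smul hK hinterp]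
  simp

lemma eigenvalues_zero_add_eigenvalues_one (hK : K.IsHermitian) :
    hK.eigenvalues 0 + hK.eigenvalues 1 = K 0 0 + K 1 1 := by
  simpa [Fin.sum_univ_two, Matrix.trace_fin_two] using hK.trace_eq_sum_eigenvalues.symm

lemma eigenvalues_zero_mul_eigenvalues_one (hK : K.IsHermitian) :
    hK.eigenvalues 0 * hK.eigenvalues 1 = K 0 0 * K 1 1 - K 0 1 * K 1 0 := by
  simpa [Fin.prod_univ_two, Matrix.det_fin_two] using hK.det_eq_prod_eigenvalues.symm

lemma eigenvalues_zero_ne_one (hK : K.IsHermitian) (h01 : K 0 1 ≠ 0) :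
    hK.eigenvalues 0 ≠ hK.eigenvalues 1 := by
  have hsymm : K 1 0 = K 0 1 := by simpa using hK.apply 0 1
  have hsum := hK.eigenvalues_zero_add_eigenvalues_one
  have hprod := hK.eigenvalues_zero_mul_eigenvalues_one
  intro heq
  rw [heq] at hsum hprod
  rw [hsymm] at hprod
  have hdisc : (K 0 0 - K 1 1) ^ 2 + 4 * K 0 1 ^ 2 = 0 := by
    linear_combination (-(hK.eigenvalues 1 + hK.eigenvalues 1 + K 0 0 + K 1 1)) * hsum + 4 * hprod
  exact h01 (pow_eq_zero_iff two_ne_zero |>.mp (by nlinarith [sq_nonneg (K 0 0 - K 1 1)]))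

end Matrix.IsHermitian

theorem offdiag_power_monotone (p : ℝ) (hp1 : 1 < p) (hp2 : p < 2)
    (a1 a2 b1 b2 s : ℝ) (ha : a1 ≥ a2) (ha2 : a2 > 0) (hb : b1 ≥ b2) (hb2 : b2 > 0)
    (hs : s ≥ 0)
    (hA : (!![a1, s; s, b1]).PosDef) (hB : (!![a2, s; s, b2]).PosDef) :
    matPow hA.1 (p - 1) 0 1 ≤ matPow hB.1 (p - 1) 0 1 := by
  have hr : p - 1 ∈ Ioo 0 1 := ⟨by linarith, by linarith⟩
  rw [hA.1.matPow_apply_zero_one_fin_two, hB.1.matPow_apply_zero_one_fin_two]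
  obtain rfl | hs := hs.eq_or_lt
  · simp
  have hsA := hA.1.eigenvalues_zero_add_eigenvalues_one
  have hpA := hA.1.eigenvalues_zero_mul_eigenvalues_one
  have hsB := hB.1.eigenvalues_zero_add_eigenvalues_one
  have hpB := hB.1.eigenvalues_zero_mul_eigenvalues_one
  simp only [Matrix.of_apply, Matrix.cons_val_zero, Matrix.cons_val_one,
    Matrix.cons_val_fin_one] at hsA hpA hsB hpB ⊢
  refine mul_le_mul_of_nonneg_right ?_ hs.le
  refine le_of_mul_le_mul_right ?_ (integral_rpowIntegrand₀₁_one_pos hr)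
  have hA0 := hA.eigenvalues_pos 0
  have hA1 := hA.eigenvalues_pos 1
  have hB0 := hB.eigenvalues_pos 0
  have hB1 := hB.eigenvalues_pos 1
  rw [slope_rpow_mul_integral_rpowIntegrand₀₁_one hr hA0.le hA1.le
      (hA.1.eigenvalues_zero_ne_one (by simpa using hs.ne')),
    slope_rpow_mul_integral_rpowIntegrand₀₁_one hr hB0.le hB1.le
      (hB.1.eigenvalues_zero_ne_one (by simpa using hs.ne'))]
  refine setIntegral_rpow_div_mul_add_le_of_mul_le hr hA0 hA1.le hB0 hB1.le fun t ht ↦ ?_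
  have hab : a2 * b2 ≤ a1 * b1 := mul_le_mul ha hb hb2.le (ha2.le.trans ha)
  nlinarith
end

section
/- Let a1 ≥ a2 > 0, b1 ≥ b2 > 0, c2 > c1 ≥ 0 with a2·b2 > c2², and 1 ≤ p ≤ 2. Set y = (c1+c2)/2, A(h) = [[a1, y+h],[y+h, b1]], B(h) = [[a2, y+h],[y+h, b2]], and f(h) = Tr(A(h)^p) + Tr(B(−h)^p) − Tr(A(−h)^p) − Tr(B(h)^p) for h ∈ [0, c2 − y]. Then f(h) ≤ 0 for all h ∈ [0, c2 − y]; in particular Tr(A(c2−y)^p) + Tr(B(y−c2)^p) ≤ Tr(A(y−c2)^p) + Tr(B(c2−y)^p). -/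
open scoped Matrix

lemma herm2 (a b c : ℝ) : (!![a, c; c, b]).IsHermitian := by
  ext i j
  fin_cases i <;> fin_cases j <;> simp [Matrix.conjTranspose_apply]

/-- `Tr K^p` for a symmetric real `2×2` matrix, via the spectral functional calculus. -/
noncomputable def trPow {K : Matrix (Fin 2) (Fin 2) ℝ} (hK : K.IsHermitian) (p : ℝ) : ℝ :=
  ∑ i, hK.eigenvalues i ^ p

/-!
With `m = (a + b) / 2` and `d = (a - b) / 2`, the eigenvalues of `!![a, c; c, b]` are
`m ± √(d² + c²)`. Writing `g(c) = Tr B(c)^p - Tr A(c)^p` as a function of the off-diagonal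
entry, `f(h) = g(y - h) - g(y + h)`, so it suffices that `g` is nondecreasing on `[0, c₂]`.
The `c`-derivative of `Tr K^p` is `2pc` times the slope of `t ↦ t^(p-1)` across the spectral
interval `[m - r, m + r]` of `K`. Since `|r_A - r_B| ≤ |d_A - d_B| ≤ m_A - m_B`, both endpoints
of the spectral interval of `B` lie to the left of those of `A`, and concavity of `t^(p-1)` for
`1 ≤ p ≤ 2` makes the slope for `B` the larger one.
-/

open Real Set

lemma rpow_add_rpow_eq_of_add_eq_of_mul_eq {x y m r : ℝ} (hsum : x + y = 2 * m)
    (hprod : x * y = m ^ 2 - r ^ 2) (p : ℝ) : x ^ p + y ^ p = (m + r) ^ p + (m - r) ^ p := by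
  have hroots : (x - (m + r)) * (x - (m - r)) = 0 := by
    linear_combination x * hsum - hprod
  rcases mul_eq_zero.mp hroots with hx | hx
  · rw [sub_eq_zero.mp hx, show y = m - r by linarith]
  · rw [sub_eq_zero.mp hx, show y = m + r by linarith, add_comm]

/-- `Tr K^p` for `K = !![m + d, c; c, m - d]`, whose eigenvalues are `m ± √(d² + c²)`. -/
noncomputable def eigenPowSum (p m d c : ℝ) : ℝ :=
  (m + √(d ^ 2 + c ^ 2)) ^ p + (m - √(d ^ 2 + c ^ 2)) ^ p

lemma trPow_herm2 (p a b c : ℝ) :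
    trPow (herm2 a b c) p = eigenPowSum p ((a + b) / 2) ((a - b) / 2) c := by
  have hsum := (herm2 a b c).trace_eq_sum_eigenvalues
  have hprod := (herm2 a b c).det_eq_prod_eigenvalues
  rw [Matrix.trace_fin_two_of, Fin.sum_univ_two] at hsum
  rw [Matrix.det_fin_two_of, Fin.prod_univ_two] at hprod
  simp only [RCLike.ofReal_real_eq_id, id] at hsum hprod
  rw [trPow, Fin.sum_univ_two, eigenPowSum]
  exact rpow_add_rpow_eq_of_add_eq_of_mul_eq (by linarith)
    (by rw [sq_sqrt (by positivity)]; linarith) p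

lemma ConcaveOn.slope_le_slope_of_le {𝕜 : Type*} [Field 𝕜] [LinearOrder 𝕜]
    [IsStrictOrderedRing 𝕜] {s : Set 𝕜} {f : 𝕜 → 𝕜} (hf : ConcaveOn 𝕜 s f) {x y z w : 𝕜}
    (hx : x ∈ s) (hy : y ∈ s) (hz : z ∈ s) (hw : w ∈ s) (hxy : x < y) (hzw : z < w)
    (hxz : x ≤ z) (hyw : y ≤ w) :
    slope f z w ≤ slope f x y := by
  have hxw : x < w := hxz.trans_lt hzw
  calc slope f z w = slope f w z := slope_comm f z w
    _ ≤ slope f w x := hf.slope_anti hw ⟨hx, hxw.ne⟩ ⟨hz, hzw.ne⟩ hxz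
    _ = slope f x w := slope_comm f w x
    _ ≤ slope f x y := hf.slope_anti hx ⟨hy, hxy.ne'⟩ ⟨hw, hxw.ne'⟩ hyw

lemma abs_sqrt_sq_add_sq_sub_le (d₁ d₂ x : ℝ) :
    |√(d₁ ^ 2 + x ^ 2) - √(d₂ ^ 2 + x ^ 2)| ≤ |d₁ - d₂| := by
  simpa [Complex.norm_eq_sqrt_sq_add_sq, sqrt_sq_eq_abs] using
    abs_norm_sub_norm_le (⟨d₁, x⟩ : ℂ) ⟨d₂, x⟩

lemma continuous_eigenPowSum {p : ℝ} (hp : 0 ≤ p) (m d : ℝ) :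
    Continuous (eigenPowSum p m d) := by
  unfold eigenPowSum
  fun_prop (disch := exact fun _ => Or.inr hp)

lemma hasDerivAt_eigenPowSum {p : ℝ} (hp : 1 ≤ p) (m d : ℝ) {c : ℝ} (hc : c ≠ 0) :
    HasDerivAt (eigenPowSum p m d)
      (2 * p * c * slope (fun t => t ^ (p - 1)) (m - √(d ^ 2 + c ^ 2)) (m + √(d ^ 2 + c ^ 2)))
      c := by
  have hsq : HasDerivAt (fun x => √(d ^ 2 + x ^ 2)) (2 * c / (2 * √(d ^ 2 + c ^ 2))) c :=
    (((hasDerivAt_pow 2 c).const_add (d ^ 2)).sqrt (by positivity)).congr_deriv (by simp)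
  refine (((hsq.const_add m).rpow_const (Or.inr hp)).add
    ((hsq.const_sub m).rpow_const (Or.inr hp))).congr_deriv ?_
  rw [slope_def_field, add_sub_sub_cancel, ← two_mul]
  ring

lemma monotoneOn_eigenPowSum_sub {p m₁ d₁ m₂ d₂ v : ℝ} (hp₁ : 1 ≤ p) (hp₂ : p ≤ 2)
    (hm : |d₁ - d₂| ≤ m₁ - m₂) (hv : √(d₂ ^ 2 + v ^ 2) ≤ m₂) :
    MonotoneOn (fun c => eigenPowSum p m₂ d₂ c - eigenPowSum p m₁ d₁ c) (Icc 0 v) := by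
  refine monotoneOn_of_hasDerivWithinAt_nonneg (convex_Icc 0 v)
    ((continuous_eigenPowSum (by linarith) m₂ d₂).sub
      (continuous_eigenPowSum (by linarith) m₁ d₁)).continuousOn
    (fun x hx => by
      rw [interior_Icc] at hx
      exact ((hasDerivAt_eigenPowSum hp₁ m₂ d₂ hx.1.ne').sub
        (hasDerivAt_eigenPowSum hp₁ m₁ d₁ hx.1.ne')).hasDerivWithinAt) ?_
  rw [interior_Icc]
  rintro x ⟨hx₀, hxv⟩
  set r₁ := √(d₁ ^ 2 + x ^ 2)
  set r₂ := √(d₂ ^ 2 + x ^ 2)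
  have hr₁ : 0 < r₁ := sqrt_pos.mpr (by positivity)
  have hr₂ : 0 < r₂ := sqrt_pos.mpr (by positivity)
  have hr₂v : r₂ ≤ √(d₂ ^ 2 + v ^ 2) := sqrt_le_sqrt (by nlinarith)
  have hr : |r₁ - r₂| ≤ m₁ - m₂ := (abs_sqrt_sq_add_sq_sub_le d₁ d₂ x).trans hm
  have hslope : slope (fun t : ℝ => t ^ (p - 1)) (m₁ - r₁) (m₁ + r₁) ≤
      slope (fun t : ℝ => t ^ (p - 1)) (m₂ - r₂) (m₂ + r₂) := by
    obtain ⟨hr₁₂, hr₂₁⟩ := abs_le.mp hr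
    refine (concaveOn_rpow (by linarith) (by linarith)).slope_le_slope_of_le
      (mem_Ici.mpr ?_) (mem_Ici.mpr ?_) (mem_Ici.mpr ?_) (mem_Ici.mpr ?_) ?_ ?_ ?_ ?_ <;> linarith
  have := mul_le_mul_of_nonneg_left hslope (by positivity : 0 ≤ 2 * p * x)
  linarith

theorem interpolation_step (p a1 a2 b1 b2 c1 c2 : ℝ)
    (hp1 : 1 ≤ p) (hp2 : p ≤ 2)
    (ha : a1 ≥ a2) (ha2 : a2 > 0) (hb : b1 ≥ b2) (hb2 : b2 > 0)
    (hc : c2 > c1) (hc1 : c1 ≥ 0) (hab : a2 * b2 > c2 ^ 2) :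
    (∀ h ∈ Set.Icc (0 : ℝ) (c2 - (c1 + c2) / 2),
      trPow (herm2 a1 b1 ((c1 + c2) / 2 + h)) p +
          trPow (herm2 a2 b2 ((c1 + c2) / 2 - h)) p -
          trPow (herm2 a1 b1 ((c1 + c2) / 2 - h)) p -
          trPow (herm2 a2 b2 ((c1 + c2) / 2 + h)) p ≤ 0) ∧
    trPow (herm2 a1 b1 c2) p + trPow (herm2 a2 b2 c1) p ≤
      trPow (herm2 a1 b1 c1) p + trPow (herm2 a2 b2 c2) p := by
  have hmono := monotoneOn_eigenPowSum_sub (m₁ := (a1 + b1) / 2) (d₁ := (a1 - b1) / 2)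
    (m₂ := (a2 + b2) / 2) (d₂ := (a2 - b2) / 2) (v := c2) hp1 hp2
    (abs_le.mpr ⟨by linarith, by linarith⟩)
    (sqrt_le_iff.mpr ⟨by positivity, by nlinarith⟩)
  refine ⟨fun h ⟨hh₀, hh₁⟩ => ?_, ?_⟩
  · have := hmono (a := (c1 + c2) / 2 - h) (b := (c1 + c2) / 2 + h)
      ⟨by linarith, by linarith⟩ ⟨by linarith, by linarith⟩ (by linarith)
    simp only [trPow_herm2]
    linarith
  · have := hmono ⟨hc1, hc.le⟩ ⟨by linarith, le_rfl⟩ hc.le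
    simp only [trPow_herm2]
    linarith
end

section
/- Let X and Y be complex n×n diagonal matrices and 1 ≤ p ≤ 2. Then ||X+Y||_p^p + ||X−Y||_p^p ≥ (||X||_p + ||Y||_p)^p + | ||X||_p − ||Y||_p |^p. For p ≥ 2 the inequality is reversed. -/
open scoped Matrix

/-!
Hanner's argument. For `0 < r ≤ 1` put `α r = (1 + r) ^ (p - 1) + (1 - r) ^ (p - 1)` and
`β r = ((1 + r) ^ (p - 1) - (1 - r) ^ (p - 1)) / r ^ (p - 1)`. For `1 ≤ p ≤ 2` and `a, b ≥ 0`,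
`α r * a ^ p + β r * b ^ p ≤ (a + b) ^ p + |a - b| ^ p`, with equality at `r = b / a`: dividing by
`a ^ p`, the function `s ↦ (1 + s) ^ p + (1 - s) ^ p - β r * s ^ p` has derivative
`p * s ^ (p - 1) * (β s - β r)`, and `β` is increasing, so its minimum on `[0, 1]` is at `s = r`.
For `p ≥ 2`, `β` is decreasing and every inequality reverses.

Thus `(A + B) ^ p + |A - B| ^ p` is a supremum (for `p ≥ 2`, an infimum) of linear forms in
`(A ^ p, B ^ p)`. Taking `r = ‖y‖_p / ‖x‖_p`, for which equality holds, and summing over the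
coordinates reduces the claim to a single coordinate,
`(|z| + |w|) ^ p + ||z| - |w|| ^ p ≤ |z + w| ^ p + |z - w| ^ p`.
This follows from the parallelogram law and the concavity (convexity) of `t ↦ t ^ (p / 2)`: the pair
`(|z + w|², |z - w|²)` lies between `(|z| - |w|)²` and `(|z| + |w|)²` and has the same sum.
Finally, the Schatten norm of a diagonal matrix is the `ℓ_p` norm of its diagonal.
-/

open Finset Matrix Set

lemma Real.sq_rpow_div_two (x p : ℝ) : (x ^ 2) ^ (p / 2) = |x| ^ p := by
  rw [← sq_abs, ← Real.rpow_natCast, ← Real.rpow_mul (abs_nonneg x)]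
  congr 1
  ring

lemma Real.rpow_eq_rpow_sub_one_mul {x p : ℝ} (hx : 0 ≤ x) (hp : p ≠ 0) :
    x ^ p = x ^ (p - 1) * x := by
  simpa using Real.rpow_add_one' hx (y := p - 1) (by simpa using hp)

lemma ConvexOn.map_add_map_le_of_add_eq {s : Set ℝ} {f : ℝ → ℝ} (hf : ConvexOn ℝ s f)
    {u v w t : ℝ} (hu : u ∈ s) (ht : t ∈ s) (huv : u ≤ v) (hvt : v ≤ t) (h : v + w = u + t) :
    f v + f w ≤ f u + f t := by
  rcases (huv.trans hvt).eq_or_lt with rfl | hut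
  · obtain rfl : v = u := le_antisymm hvt huv
    obtain rfl : w = v := by linarith
    rfl
  have hpos : 0 < t - u := sub_pos.mpr hut
  set a := (t - v) / (t - u)
  set b := (v - u) / (t - u)
  have ha : 0 ≤ a := div_nonneg (sub_nonneg.2 hvt) hpos.le
  have hb : 0 ≤ b := div_nonneg (sub_nonneg.2 huv) hpos.le
  have hab : a + b = 1 := by simp only [a, b]; field_simp; ring
  have hv := hf.2 hu ht ha hb hab
  have hw := hf.2 hu ht hb ha (by linarith)
  have ev : a • u + b • t = v := by simp only [a, b, smul_eq_mul]; field_simp; ring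
  have ew : b • u + a • t = w := by
    rw [show w = u + t - v by linarith]; simp only [a, b, smul_eq_mul]; field_simp; ring
  rw [ev] at hv
  rw [ew] at hw
  simp only [smul_eq_mul] at hv hw
  linear_combination hv + hw + (f u + f t) * hab

lemma ConcaveOn.map_add_map_le_of_add_eq {s : Set ℝ} {f : ℝ → ℝ} (hf : ConcaveOn ℝ s f)
    {u v w t : ℝ} (hu : u ∈ s) (ht : t ∈ s) (huv : u ≤ v) (hvt : v ≤ t) (h : v + w = u + t) :
    f u + f t ≤ f v + f w := by
  have := hf.neg.map_add_map_le_of_add_eq hu ht huv hvt h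
  simp only [Pi.neg_apply] at this
  linarith

noncomputable def hannerTerm (p a b : ℝ) : ℝ := (a + b) ^ p + |a - b| ^ p

lemma hannerTerm_comm (p a b : ℝ) : hannerTerm p a b = hannerTerm p b a := by
  rw [hannerTerm, hannerTerm, add_comm a, abs_sub_comm]

lemma hannerTerm_of_le {p a b : ℝ} (hba : b ≤ a) :
    hannerTerm p a b = (a + b) ^ p + (a - b) ^ p := by
  rw [hannerTerm, abs_of_nonneg (sub_nonneg.2 hba)]

section InnerProductSpace

variable {E : Type*} [NormedAddCommGroup E] [InnerProductSpace ℝ E]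

lemma ConvexOn.map_norm_add_sq_add_map_norm_sub_sq_le {f : ℝ → ℝ} (hf : ConvexOn ℝ (Ici 0) f)
    (z w : E) :
    f (‖z + w‖ ^ 2) + f (‖z - w‖ ^ 2) ≤ f ((‖z‖ - ‖w‖) ^ 2) + f ((‖z‖ + ‖w‖) ^ 2) := by
  have hlow : |‖z‖ - ‖w‖| ≤ ‖z + w‖ := by
    simpa only [norm_neg, sub_neg_eq_add] using abs_norm_sub_norm_le z (-w)
  refine hf.map_add_map_le_of_add_eq (mem_Ici.2 (sq_nonneg _)) (mem_Ici.2 (sq_nonneg _)) ?_ ?_ ?_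
  · exact sq_le_sq' (abs_le.1 hlow).1 (abs_le.1 hlow).2
  · exact pow_le_pow_left₀ (norm_nonneg _) (norm_add_le z w) 2
  · linear_combination parallelogram_law_with_norm ℝ z w

lemma hannerTerm_le_norm_add_rpow_add_norm_sub_rpow {p : ℝ} (hp₁ : 1 ≤ p) (hp₂ : p ≤ 2)
    (z w : E) : hannerTerm p ‖z‖ ‖w‖ ≤ ‖z + w‖ ^ p + ‖z - w‖ ^ p := by
  have := (Real.concaveOn_rpow (p := p / 2) (by linarith) (by linarith)).neg
    |>.map_norm_add_sq_add_map_norm_sub_sq_le z w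
  simp only [Pi.neg_apply, Real.sq_rpow_div_two, abs_norm,
    abs_of_nonneg (add_nonneg (norm_nonneg z) (norm_nonneg w))] at this
  rw [hannerTerm]
  linarith

lemma norm_add_rpow_add_norm_sub_rpow_le_hannerTerm {p : ℝ} (hp : 2 ≤ p) (z w : E) :
    ‖z + w‖ ^ p + ‖z - w‖ ^ p ≤ hannerTerm p ‖z‖ ‖w‖ := by
  have := (convexOn_rpow (p := p / 2) (by linarith)).map_norm_add_sq_add_map_norm_sub_sq_le z w
  simp only [Real.sq_rpow_div_two, abs_norm,
    abs_of_nonneg (add_nonneg (norm_nonneg z) (norm_nonneg w))] at this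
  rw [hannerTerm]
  linarith

end InnerProductSpace

noncomputable def hannerAlpha (p r : ℝ) : ℝ := (1 + r) ^ (p - 1) + (1 - r) ^ (p - 1)

noncomputable def hannerBeta (p r : ℝ) : ℝ :=
  ((1 + r) ^ (p - 1) - (1 - r) ^ (p - 1)) / r ^ (p - 1)

lemma hannerBeta_mul_rpow {p r : ℝ} (hr : 0 < r) :
    hannerBeta p r * r ^ (p - 1) = (1 + r) ^ (p - 1) - (1 - r) ^ (p - 1) :=
  div_mul_cancel₀ _ (Real.rpow_pos_of_pos hr _).ne'

-- `β r` is the increment of `t ↦ t ^ (p - 1)` over `[r⁻¹ - 1, r⁻¹ + 1]`, so its monotonicity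
-- comes from the concavity (`p ≤ 2`) or convexity (`p ≥ 2`) of that power.
lemma hannerBeta_eq {p r : ℝ} (hr₀ : 0 < r) (hr₁ : r ≤ 1) :
    hannerBeta p r = (r⁻¹ + 1) ^ (p - 1) - (r⁻¹ - 1) ^ (p - 1) := by
  rw [hannerBeta, sub_div, ← Real.div_rpow (by linarith) hr₀.le,
    ← Real.div_rpow (by linarith) hr₀.le]
  congr 2 <;> field_simp

lemma monotoneOn_hannerBeta {p : ℝ} (hp₁ : 1 ≤ p) (hp₂ : p ≤ 2) :
    MonotoneOn (hannerBeta p) (Ioc 0 1) := by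
  intro r ⟨hr₀, hr₁⟩ s ⟨hs₀, hs₁⟩ hrs
  have hinv : s⁻¹ ≤ r⁻¹ := inv_anti₀ hr₀ hrs
  have hs : 1 ≤ s⁻¹ := (one_le_inv₀ hs₀).2 hs₁
  have := (Real.concaveOn_rpow (p := p - 1) (by linarith) (by linarith)).map_add_map_le_of_add_eq
    (u := s⁻¹ - 1) (v := s⁻¹ + 1) (w := r⁻¹ - 1) (t := r⁻¹ + 1)
    (Set.mem_Ici.2 (by linarith)) (Set.mem_Ici.2 (by linarith)) (by linarith) (by linarith)
    (by ring)
  rw [hannerBeta_eq hr₀ hr₁, hannerBeta_eq hs₀ hs₁]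
  linarith

lemma antitoneOn_hannerBeta {p : ℝ} (hp : 2 ≤ p) : AntitoneOn (hannerBeta p) (Ioc 0 1) := by
  intro r ⟨hr₀, hr₁⟩ s ⟨hs₀, hs₁⟩ hrs
  have hinv : s⁻¹ ≤ r⁻¹ := inv_anti₀ hr₀ hrs
  have hs : 1 ≤ s⁻¹ := (one_le_inv₀ hs₀).2 hs₁
  have := (convexOn_rpow (p := p - 1) (by linarith)).map_add_map_le_of_add_eq
    (u := s⁻¹ - 1) (v := s⁻¹ + 1) (w := r⁻¹ - 1) (t := r⁻¹ + 1)
    (Set.mem_Ici.2 (by linarith)) (Set.mem_Ici.2 (by linarith)) (by linarith) (by linarith)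
    (by ring)
  rw [hannerBeta_eq hr₀ hr₁, hannerBeta_eq hs₀ hs₁]
  linarith

lemma hannerBeta_le_hannerAlpha {p r : ℝ} (hp₁ : 1 ≤ p) (hp₂ : p ≤ 2) (hr₀ : 0 < r)
    (hr₁ : r ≤ 1) : hannerBeta p r ≤ hannerAlpha p r := by
  have h₁ := Real.rpow_add_le_add_rpow (p := p - 1) (a := 1 - r) (b := 2 * r) (by linarith)
    (by linarith) (by linarith) (by linarith)
  have h₂ := Real.rpow_add_le_add_rpow (p := p - 1) (a := 1 + r) (b := 1 - r) (by linarith)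
    (by linarith) (by linarith) (by linarith)
  rw [show 1 - r + 2 * r = 1 + r by ring, Real.mul_rpow zero_le_two hr₀.le] at h₁
  rw [show 1 + r + (1 - r) = 2 by ring] at h₂
  rw [hannerAlpha, ← mul_le_mul_iff_of_pos_right (Real.rpow_pos_of_pos hr₀ (p - 1)),
    hannerBeta_mul_rpow hr₀]
  nlinarith [mul_le_mul_of_nonneg_right h₂ (Real.rpow_nonneg hr₀.le (p - 1))]

lemma hannerAlpha_le_hannerBeta {p r : ℝ} (hp : 2 ≤ p) (hr₀ : 0 < r) (hr₁ : r ≤ 1) :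
    hannerAlpha p r ≤ hannerBeta p r := by
  have h₁ := Real.add_rpow_le_rpow_add (p := p - 1) (a := 1 - r) (b := 2 * r) (by linarith)
    (by linarith) (by linarith)
  have h₂ := Real.add_rpow_le_rpow_add (p := p - 1) (a := 1 + r) (b := 1 - r) (by linarith)
    (by linarith) (by linarith)
  rw [show 1 - r + 2 * r = 1 + r by ring, Real.mul_rpow zero_le_two hr₀.le] at h₁
  rw [show 1 + r + (1 - r) = 2 by ring] at h₂
  rw [hannerAlpha, ← mul_le_mul_iff_of_pos_right (Real.rpow_pos_of_pos hr₀ (p - 1)),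
    hannerBeta_mul_rpow hr₀]
  nlinarith [mul_le_mul_of_nonneg_right h₂ (Real.rpow_nonneg hr₀.le (p - 1))]

noncomputable def hannerProfile (p r s : ℝ) : ℝ :=
  (1 + s) ^ p + (1 - s) ^ p - hannerBeta p r * s ^ p

lemma hannerProfile_self {p r : ℝ} (hp : p ≠ 0) (hr₀ : 0 < r) (hr₁ : r ≤ 1) :
    hannerProfile p r r = hannerAlpha p r := by
  rw [hannerProfile, hannerAlpha, Real.rpow_eq_rpow_sub_one_mul (by linarith) hp,
    Real.rpow_eq_rpow_sub_one_mul (by linarith : 0 ≤ 1 - r) hp,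
    Real.rpow_eq_rpow_sub_one_mul hr₀.le hp, ← mul_assoc, hannerBeta_mul_rpow hr₀]
  ring

lemma hannerProfile_div_mul_rpow (p r : ℝ) {a b : ℝ} (hb : 0 ≤ b) (hba : b ≤ a) (ha : 0 < a) :
    hannerProfile p r (b / a) * a ^ p = (a + b) ^ p + (a - b) ^ p - hannerBeta p r * b ^ p := by
  have hdiv : b / a ≤ 1 := (div_le_one ha).2 hba
  rw [hannerProfile, sub_mul, add_mul, mul_assoc, ← Real.mul_rpow (by positivity) ha.le,
    ← Real.mul_rpow (by linarith) ha.le, ← Real.mul_rpow (by positivity) ha.le]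
  congr 4 <;> field_simp

lemma continuous_hannerProfile {p : ℝ} (hp : 0 ≤ p) (r : ℝ) : Continuous (hannerProfile p r) := by
  unfold hannerProfile
  fun_prop (disch := exact Or.inr hp)

lemma hasDerivAt_hannerProfile (p r : ℝ) {s : ℝ} (hs₀ : 0 < s) (hs₁ : s < 1) :
    HasDerivAt (hannerProfile p r) (p * s ^ (p - 1) * (hannerBeta p s - hannerBeta p r)) s := by
  have hplus := ((hasDerivAt_id' s).const_add 1).rpow_const (p := p) (Or.inl (by linarith))
  have hminus := ((hasDerivAt_id' s).const_sub 1).rpow_const (p := p) (Or.inl (by linarith))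
  have hpow := (Real.hasDerivAt_rpow_const (p := p) (Or.inl hs₀.ne')).const_mul (hannerBeta p r)
  refine ((hplus.add hminus).sub hpow).congr_deriv ?_
  linear_combination (-p) * hannerBeta_mul_rpow (p := p) hs₀

lemma isMinOn_hannerProfile {p r : ℝ} (hp₁ : 1 ≤ p) (hp₂ : p ≤ 2) (hr₀ : 0 < r) (hr₁ : r ≤ 1) :
    IsMinOn (hannerProfile p r) (Icc 0 1) r := by
  have hc := continuous_hannerProfile (by linarith : 0 ≤ p) r
  have hβ := monotoneOn_hannerBeta hp₁ hp₂
  have hpos {x : ℝ} (hx : 0 < x) : 0 ≤ p * x ^ (p - 1) :=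
    mul_nonneg (by linarith) (Real.rpow_nonneg hx.le _)
  have hd {x : ℝ} (hx₀ : 0 < x) (hx₁ : x < 1) := hasDerivAt_hannerProfile p r hx₀ hx₁
  refine isMinOn_Icc_of_deriv hc.continuousAt hc.continuousAt hc.continuousAt
    (fun x hx ↦ (hd hx.1 (by linarith [hx.2])).differentiableAt.differentiableWithinAt)
    (fun x hx ↦ (hd (by linarith [hx.1]) hx.2).differentiableAt.differentiableWithinAt)
    (fun x ⟨hx₀, hxr⟩ ↦ ?_) (fun x ⟨hrx, hx₁⟩ ↦ ?_)
  · rw [(hd hx₀ (by linarith)).deriv]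
    exact mul_nonpos_of_nonneg_of_nonpos (hpos hx₀)
      (sub_nonpos.2 (hβ ⟨hx₀, by linarith⟩ ⟨hr₀, hr₁⟩ hxr.le))
  · rw [(hd (by linarith) hx₁).deriv]
    exact mul_nonneg (hpos (by linarith))
      (sub_nonneg.2 (hβ ⟨hr₀, hr₁⟩ ⟨by linarith, hx₁.le⟩ hrx.le))

lemma isMaxOn_hannerProfile {p r : ℝ} (hp : 2 ≤ p) (hr₀ : 0 < r) (hr₁ : r ≤ 1) :
    IsMaxOn (hannerProfile p r) (Icc 0 1) r := by
  have hc := continuous_hannerProfile (by linarith : 0 ≤ p) r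
  have hβ := antitoneOn_hannerBeta hp
  have hpos {x : ℝ} (hx : 0 < x) : 0 ≤ p * x ^ (p - 1) :=
    mul_nonneg (by linarith) (Real.rpow_nonneg hx.le _)
  have hd {x : ℝ} (hx₀ : 0 < x) (hx₁ : x < 1) := hasDerivAt_hannerProfile p r hx₀ hx₁
  refine isMaxOn_Icc_of_deriv hc.continuousAt hc.continuousAt hc.continuousAt
    (fun x hx ↦ (hd hx.1 (by linarith [hx.2])).differentiableAt.differentiableWithinAt)
    (fun x hx ↦ (hd (by linarith [hx.1]) hx.2).differentiableAt.differentiableWithinAt)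
    (fun x ⟨hx₀, hxr⟩ ↦ ?_) (fun x ⟨hrx, hx₁⟩ ↦ ?_)
  · rw [(hd hx₀ (by linarith)).deriv]
    exact mul_nonneg (hpos hx₀) (sub_nonneg.2 (hβ ⟨hx₀, by linarith⟩ ⟨hr₀, hr₁⟩ hxr.le))
  · rw [(hd (by linarith) hx₁).deriv]
    exact mul_nonpos_of_nonneg_of_nonpos (hpos (by linarith))
      (sub_nonpos.2 (hβ ⟨hr₀, hr₁⟩ ⟨by linarith, hx₁.le⟩ hrx.le))

lemma hannerAlpha_div_mul_add_hannerBeta_div_mul {p a b : ℝ} (hp : p ≠ 0) (hb : 0 < b)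
    (hba : b ≤ a) :
    hannerAlpha p (b / a) * a ^ p + hannerBeta p (b / a) * b ^ p = hannerTerm p a b := by
  have ha : 0 < a := hb.trans_le hba
  rw [← hannerProfile_self hp (div_pos hb ha) ((div_le_one ha).2 hba),
    hannerProfile_div_mul_rpow p _ hb.le hba ha, hannerTerm_of_le hba]
  ring

lemma hannerAlpha_mul_add_hannerBeta_mul_le_of_le {p r a b : ℝ} (hp₁ : 1 ≤ p) (hp₂ : p ≤ 2)
    (hr₀ : 0 < r) (hr₁ : r ≤ 1) (hb : 0 ≤ b) (hba : b ≤ a) :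
    hannerAlpha p r * a ^ p + hannerBeta p r * b ^ p ≤ (a + b) ^ p + (a - b) ^ p := by
  rcases (hb.trans hba).eq_or_lt with rfl | ha
  · obtain rfl : b = 0 := le_antisymm hba hb
    simp [Real.zero_rpow (by linarith : p ≠ 0)]
  have hmin := isMinOn_iff.1 (isMinOn_hannerProfile hp₁ hp₂ hr₀ hr₁) (b / a)
    ⟨div_nonneg hb ha.le, (div_le_one ha).2 hba⟩
  rw [hannerProfile_self (by linarith) hr₀ hr₁] at hmin
  have := mul_le_mul_of_nonneg_right hmin (Real.rpow_nonneg ha.le p)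
  rw [hannerProfile_div_mul_rpow p r hb hba ha] at this
  linarith

lemma le_hannerAlpha_mul_add_hannerBeta_mul_of_le {p r a b : ℝ} (hp : 2 ≤ p)
    (hr₀ : 0 < r) (hr₁ : r ≤ 1) (hb : 0 ≤ b) (hba : b ≤ a) :
    (a + b) ^ p + (a - b) ^ p ≤ hannerAlpha p r * a ^ p + hannerBeta p r * b ^ p := by
  rcases (hb.trans hba).eq_or_lt with rfl | ha
  · obtain rfl : b = 0 := le_antisymm hba hb
    simp [Real.zero_rpow (by linarith : p ≠ 0)]
  have hmax := isMaxOn_iff.1 (isMaxOn_hannerProfile hp hr₀ hr₁) (b / a)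
    ⟨div_nonneg hb ha.le, (div_le_one ha).2 hba⟩
  rw [hannerProfile_self (by linarith) hr₀ hr₁] at hmax
  have := mul_le_mul_of_nonneg_right hmax (Real.rpow_nonneg ha.le p)
  rw [hannerProfile_div_mul_rpow p r hb hba ha] at this
  linarith

lemma hannerAlpha_mul_add_hannerBeta_mul_le {p r a b : ℝ} (hp₁ : 1 ≤ p) (hp₂ : p ≤ 2)
    (hr₀ : 0 < r) (hr₁ : r ≤ 1) (ha : 0 ≤ a) (hb : 0 ≤ b) :
    hannerAlpha p r * a ^ p + hannerBeta p r * b ^ p ≤ hannerTerm p a b := by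
  rcases le_total b a with hba | hab
  · rw [hannerTerm_of_le hba]
    exact hannerAlpha_mul_add_hannerBeta_mul_le_of_le hp₁ hp₂ hr₀ hr₁ hb hba
  · have hswap := hannerAlpha_mul_add_hannerBeta_mul_le_of_le hp₁ hp₂ hr₀ hr₁ ha hab
    have hβα := hannerBeta_le_hannerAlpha hp₁ hp₂ hr₀ hr₁
    have hpow : a ^ p ≤ b ^ p := Real.rpow_le_rpow ha hab (by linarith)
    rw [hannerTerm_comm, hannerTerm_of_le hab]
    nlinarith [mul_le_mul_of_nonneg_left hpow (sub_nonneg.2 hβα)]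

lemma hannerTerm_le_hannerAlpha_mul_add_hannerBeta_mul {p r a b : ℝ} (hp : 2 ≤ p)
    (hr₀ : 0 < r) (hr₁ : r ≤ 1) (ha : 0 ≤ a) (hb : 0 ≤ b) :
    hannerTerm p a b ≤ hannerAlpha p r * a ^ p + hannerBeta p r * b ^ p := by
  rcases le_total b a with hba | hab
  · rw [hannerTerm_of_le hba]
    exact le_hannerAlpha_mul_add_hannerBeta_mul_of_le hp hr₀ hr₁ hb hba
  · have hswap := le_hannerAlpha_mul_add_hannerBeta_mul_of_le hp hr₀ hr₁ ha hab
    have hαβ := hannerAlpha_le_hannerBeta hp hr₀ hr₁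
    have hpow : a ^ p ≤ b ^ p := Real.rpow_le_rpow ha hab (by linarith)
    rw [hannerTerm_comm, hannerTerm_of_le hab]
    nlinarith [mul_le_mul_of_nonneg_left hpow (sub_nonneg.2 hαβ)]

noncomputable def pNorm {ι : Type*} [Fintype ι] (p : ℝ) (a : ι → ℝ) : ℝ :=
  (∑ i, a i ^ p) ^ (1 / p)

section pNorm

variable {ι : Type*} [Fintype ι] {p : ℝ} {a b : ι → ℝ}

lemma pNorm_nonneg (ha : 0 ≤ a) : 0 ≤ pNorm p a :=
  Real.rpow_nonneg (sum_nonneg fun i _ ↦ Real.rpow_nonneg (ha i) _) _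

lemma pNorm_rpow (hp : p ≠ 0) (ha : 0 ≤ a) : pNorm p a ^ p = ∑ i, a i ^ p := by
  rw [pNorm, ← Real.rpow_mul (sum_nonneg fun i _ ↦ Real.rpow_nonneg (ha i) _),
    one_div_mul_cancel hp, Real.rpow_one]

lemma eq_zero_of_pNorm_eq_zero (hp : p ≠ 0) (ha : 0 ≤ a) (h : pNorm p a = 0) : a = 0 := by
  have hsum : ∑ i, a i ^ p = 0 := by rw [← pNorm_rpow hp ha, h, Real.zero_rpow hp]
  funext i
  have hi := (sum_eq_zero_iff_of_nonneg fun i _ ↦ Real.rpow_nonneg (ha i) p).1 hsum i (mem_univ i)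
  exact (Real.rpow_eq_zero (ha i) hp).1 hi

lemma hannerTerm_pNorm_eq_sum_of_pNorm_eq_zero (hp : p ≠ 0) (ha : 0 ≤ a) (hb : 0 ≤ b)
    (h : pNorm p b = 0) :
    hannerTerm p (pNorm p a) (pNorm p b) = ∑ i, hannerTerm p (a i) (b i) := by
  have hzero {c : ℝ} (hc : 0 ≤ c) : hannerTerm p c 0 = 2 * c ^ p := by
    rw [hannerTerm_of_le hc, add_zero, sub_zero, two_mul]
  obtain rfl := eq_zero_of_pNorm_eq_zero hp hb h
  rw [h, hzero (pNorm_nonneg ha), pNorm_rpow hp ha, mul_sum]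
  exact sum_congr rfl fun i _ ↦ (hzero (ha i)).symm

lemma hannerTerm_pNorm_eq_sum (hp : p ≠ 0) (ha : 0 ≤ a) (hb : 0 ≤ b) (hB : 0 < pNorm p b)
    (hBA : pNorm p b ≤ pNorm p a) :
    hannerTerm p (pNorm p a) (pNorm p b) =
      ∑ i, (hannerAlpha p (pNorm p b / pNorm p a) * a i ^ p +
        hannerBeta p (pNorm p b / pNorm p a) * b i ^ p) := by
  rw [← hannerAlpha_div_mul_add_hannerBeta_div_mul hp hB hBA, sum_add_distrib, ← mul_sum,
    ← mul_sum, pNorm_rpow hp ha, pNorm_rpow hp hb]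

theorem hannerTerm_pNorm_le_sum (hp₁ : 1 ≤ p) (hp₂ : p ≤ 2) (ha : 0 ≤ a) (hb : 0 ≤ b) :
    hannerTerm p (pNorm p a) (pNorm p b) ≤ ∑ i, hannerTerm p (a i) (b i) := by
  wlog hBA : pNorm p b ≤ pNorm p a generalizing a b with H
  · rw [hannerTerm_comm]
    simpa only [hannerTerm_comm p (b _)] using H hb ha (le_of_not_ge hBA)
  have hp : p ≠ 0 := (zero_lt_one.trans_le hp₁).ne'
  rcases (pNorm_nonneg hb).eq_or_lt with hB | hB
  · exact (hannerTerm_pNorm_eq_sum_of_pNorm_eq_zero hp ha hb hB.symm).le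
  have hA := hB.trans_le hBA
  rw [hannerTerm_pNorm_eq_sum hp ha hb hB hBA]
  exact sum_le_sum fun i _ ↦ hannerAlpha_mul_add_hannerBeta_mul_le hp₁ hp₂ (div_pos hB hA)
    ((div_le_one hA).2 hBA) (ha i) (hb i)

theorem sum_hannerTerm_le_hannerTerm_pNorm (hp : 2 ≤ p) (ha : 0 ≤ a) (hb : 0 ≤ b) :
    ∑ i, hannerTerm p (a i) (b i) ≤ hannerTerm p (pNorm p a) (pNorm p b) := by
  wlog hBA : pNorm p b ≤ pNorm p a generalizing a b with H
  · rw [hannerTerm_comm]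
    simpa only [hannerTerm_comm p (b _)] using H hb ha (le_of_not_ge hBA)
  have hp₀ : p ≠ 0 := (zero_lt_two.trans_le hp).ne'
  rcases (pNorm_nonneg hb).eq_or_lt with hB | hB
  · exact (hannerTerm_pNorm_eq_sum_of_pNorm_eq_zero hp₀ ha hb hB.symm).ge
  have hA := hB.trans_le hBA
  rw [hannerTerm_pNorm_eq_sum hp₀ ha hb hB hBA]
  exact sum_le_sum fun i _ ↦ hannerTerm_le_hannerAlpha_mul_add_hannerBeta_mul hp (div_pos hB hA)
    ((div_le_one hA).2 hBA) (ha i) (hb i)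

variable {E : Type*} [NormedAddCommGroup E] [InnerProductSpace ℝ E]

theorem hannerTerm_pNorm_norm_le (hp₁ : 1 ≤ p) (hp₂ : p ≤ 2) (f g : ι → E) :
    hannerTerm p (pNorm p fun i ↦ ‖f i‖) (pNorm p fun i ↦ ‖g i‖) ≤
      ∑ i, ‖f i + g i‖ ^ p + ∑ i, ‖f i - g i‖ ^ p := by
  rw [← sum_add_distrib]
  exact (hannerTerm_pNorm_le_sum hp₁ hp₂ (fun i ↦ norm_nonneg _) fun i ↦ norm_nonneg _).trans
    (sum_le_sum fun i _ ↦ hannerTerm_le_norm_add_rpow_add_norm_sub_rpow hp₁ hp₂ (f i) (g i))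

theorem le_hannerTerm_pNorm_norm (hp : 2 ≤ p) (f g : ι → E) :
    ∑ i, ‖f i + g i‖ ^ p + ∑ i, ‖f i - g i‖ ^ p ≤
      hannerTerm p (pNorm p fun i ↦ ‖f i‖) (pNorm p fun i ↦ ‖g i‖) := by
  rw [← sum_add_distrib]
  exact (sum_le_sum fun i _ ↦ norm_add_rpow_add_norm_sub_rpow_le_hannerTerm hp (f i) (g i)).trans
    (sum_hannerTerm_le_hannerTerm_pNorm hp (fun i ↦ norm_nonneg _) fun i ↦ norm_nonneg _)

end pNorm

lemma Matrix.IsHermitian.sum_comp_eigenvalues_of_eq_diagonal {𝕜 ι M : Type*} [RCLike 𝕜]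
    [Fintype ι] [DecidableEq ι] [AddCommMonoid M] {A : Matrix ι ι 𝕜} (hA : A.IsHermitian)
    {c : ι → ℝ} (h : A = diagonal fun i ↦ (c i : 𝕜)) (g : ℝ → M) :
    ∑ i, g (hA.eigenvalues i) = ∑ i, g (c i) := by
  have hroots : A.charpoly.roots = univ.val.map fun i ↦ (c i : 𝕜) := by
    rw [h, charpoly_diagonal, Polynomial.roots_prod _ _
      (by simp [prod_ne_zero_iff, Polynomial.X_sub_C_ne_zero])]
    simp
  have hmap : univ.val.map hA.eigenvalues = univ.val.map c := by
    simpa [Multiset.map_map, Function.comp_def] using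
      congrArg (Multiset.map RCLike.re) (hA.roots_charpoly_eq_eigenvalues.symm.trans hroots)
  simpa only [Multiset.map_map, Function.comp_def, sum_map_val] using
    congrArg (fun s ↦ (s.map g).sum) hmap

lemma schattenNorm_diagonal {ι : Type*} [Fintype ι] [DecidableEq ι] (p : ℝ) (d : ι → ℂ) :
    schattenNorm p (diagonal d) = pNorm p fun i ↦ ‖d i‖ := by
  have hA : (diagonal d)ᴴ * diagonal d = diagonal fun i ↦ ((‖d i‖ ^ 2 : ℝ) : ℂ) := by
    rw [diagonal_conjTranspose, diagonal_mul_diagonal]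
    congr 1
    funext i
    simp [Complex.conj_mul']
  rw [schattenNorm, pNorm,
    (isHermitian_conjTranspose_mul_self _).sum_comp_eigenvalues_of_eq_diagonal
      (c := fun i ↦ ‖d i‖ ^ 2) hA fun t ↦ t ^ (p / 2)]
  simp only [Real.sq_rpow_div_two, abs_norm]

theorem hanner_diagonal {n : ℕ} (p : ℝ) (x y : Fin n → ℂ) :
    (1 ≤ p → p ≤ 2 →
      (schattenNorm p (Matrix.diagonal x) + schattenNorm p (Matrix.diagonal y)) ^ p +
          |schattenNorm p (Matrix.diagonal x) - schattenNorm p (Matrix.diagonal y)| ^ p ≤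
        schattenNorm p (Matrix.diagonal x + Matrix.diagonal y) ^ p +
          schattenNorm p (Matrix.diagonal x - Matrix.diagonal y) ^ p) ∧
    (2 ≤ p →
      schattenNorm p (Matrix.diagonal x + Matrix.diagonal y) ^ p +
          schattenNorm p (Matrix.diagonal x - Matrix.diagonal y) ^ p ≤
        (schattenNorm p (Matrix.diagonal x) + schattenNorm p (Matrix.diagonal y)) ^ p +
          |schattenNorm p (Matrix.diagonal x) - schattenNorm p (Matrix.diagonal y)| ^ p) := by
  simp only [diagonal_add, diagonal_sub, schattenNorm_diagonal]
  refine ⟨fun hp₁ hp₂ ↦ ?_, fun hp ↦ ?_⟩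
  · have hp₀ : p ≠ 0 := (zero_lt_one.trans_le hp₁).ne'
    rw [pNorm_rpow hp₀ fun i ↦ norm_nonneg _, pNorm_rpow hp₀ fun i ↦ norm_nonneg _]
    exact hannerTerm_pNorm_norm_le hp₁ hp₂ x y
  · have hp₀ : p ≠ 0 := (zero_lt_two.trans_le hp).ne'
    rw [pNorm_rpow hp₀ fun i ↦ norm_nonneg _, pNorm_rpow hp₀ fun i ↦ norm_nonneg _]
    exact le_hannerTerm_pNorm_norm hp x y
end
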